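/- For every integer d ≥ 2, the space SC_d(1,1;o) = {((x,r),(y,s)) ∈ (ℝ^d × ℝ)² : r > 0, s > 0, x_d ≥ r, ‖x‖ + r ≤ 1, y_d = 0, ‖y‖ + s ≤ 1, and ‖x − y‖ ≥ r + s} (the configurations of one ball and one nonoverlapping semiball in the closed upper unit semiball of ℝ^d), with the subspace topology, is contractible. -/

import Mathlib

/-
Four deformations, each staying inside the configuration space, contract it. First halve both
radii, so that `2 r + s ≤ 1`. Then raise the ball vertically until it touches the unit sphere:
since the semiball lies in the hyperplane, this only increases the distance between the centres.
Then rotate the ball at fixed norm to the north pole: along this rotation `‖x_t - y‖²` is affine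
in `t`, with endpoint values `‖x - y‖²` and `‖x‖² + ‖y‖² ≥ (1 - r)² ≥ (r + s)²`. Finally, with the
ball at the pole, interpolate linearly to a fixed configuration.
-/

open scoped RealInnerProductSpace

theorem ContractibleSpace.of_deformation {Z : Type*} [TopologicalSpace Z] {p q : Z → Prop}
    (hq : ContractibleSpace {z // q z}) (F : ℝ → Z → Z)
    (hF : Continuous fun p : ℝ × Z => F p.1 p.2)
    (hFp : ∀ t ∈ Set.Icc (0 : ℝ) 1, ∀ z, p z → p (F t z)) (hF₀ : ∀ z, p z → F 0 z = z)
    (hF₁ : ∀ z, p z → q (F 1 z)) (hqp : ∀ z, q z → p z) : ContractibleSpace {z // p z} := by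
  let retract : C({z // p z}, {z // q z}) :=
    ⟨fun z => ⟨F 1 z, hF₁ _ z.2⟩, by fun_prop⟩
  let incl : C({z // q z}, {z // p z}) := ⟨fun z => ⟨z, hqp _ z.2⟩, by fun_prop⟩
  have hdef : (ContinuousMap.id _).Homotopic (incl.comp retract) :=
    ⟨{ toFun := fun tz => ⟨F tz.1 tz.2, hFp _ tz.1.2 _ tz.2.2⟩
       continuous_toFun := by fun_prop
       map_zero_left := fun z => Subtype.ext (hF₀ _ z.2)
       map_one_left := fun _ => rfl }⟩
  obtain ⟨z, hz⟩ := ((id_nullhomotopic {z // q z}).comp_left retract).comp_right incl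
  exact (contractible_iff_id_nullhomotopic _).2 ⟨z, hdef.trans hz⟩

namespace SwissCheese

variable {E : Type*} [NormedAddCommGroup E] [InnerProductSpace ℝ E] {e : E}

section Vertical

def horiz (e x : E) : E := x - ⟪x, e⟫ • e

variable (he : ‖e‖ = 1)
include he

theorem inner_add_smul_of_inner_eq_zero {v : E} (hv : ⟪v, e⟫ = 0) (a : ℝ) :
    ⟪v + a • e, e⟫ = a := by
  rw [inner_add_left, hv, real_inner_smul_left, real_inner_self_eq_norm_sq, he]; ring

theorem norm_add_smul_sq_of_inner_eq_zero {v : E} (hv : ⟪v, e⟫ = 0) (a : ℝ) :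
    ‖v + a • e‖ ^ 2 = ‖v‖ ^ 2 + a ^ 2 := by
  rw [norm_add_sq_real, real_inner_smul_right, hv, norm_smul, he, Real.norm_eq_abs]; ring_nf; simp

theorem inner_horiz_eq_zero (x : E) : ⟪horiz e x, e⟫ = 0 := by
  rw [horiz, inner_sub_left, real_inner_smul_left, real_inner_self_eq_norm_sq, he]; ring

omit he in
theorem horiz_add_smul (x : E) : horiz e x + ⟪x, e⟫ • e = x := sub_add_cancel _ _

theorem norm_sq_eq_norm_horiz_sq_add (x : E) : ‖x‖ ^ 2 = ‖horiz e x‖ ^ 2 + ⟪x, e⟫ ^ 2 := by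
  conv_lhs => rw [← horiz_add_smul (e := e) x]
  exact norm_add_smul_sq_of_inner_eq_zero he (inner_horiz_eq_zero he x) _

theorem inner_le_norm_of_norm_eq_one (x : E) : ⟪x, e⟫ ≤ ‖x‖ := by
  simpa [he] using real_inner_le_norm x e

end Vertical

abbrev Config (E : Type*) := (E × ℝ) × (E × ℝ)

/-- A ball `(c.1.1, c.1.2)` and a semiball `(c.2.1, c.2.2)` as in `SC(1,1;o)`, with heights
measured along the unit vector `e` in place of the last coordinate. -/
structure Admissible (e : E) (c : Config E) : Prop where
  ball_radius_pos : 0 < c.1.2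
  semiball_radius_pos : 0 < c.2.2
  radius_le_height : ⟪c.1.1, e⟫ ≥ c.1.2
  ball_inside : ‖c.1.1‖ + c.1.2 ≤ 1
  semiball_flat : ⟪c.2.1, e⟫ = 0
  semiball_inside : ‖c.2.1‖ + c.2.2 ≤ 1
  separated : ‖c.1.1 - c.2.1‖ ≥ c.1.2 + c.2.2

theorem admissible_iff {c : Config E} :
    Admissible e c ↔ 0 < c.1.2 ∧ 0 < c.2.2 ∧ ⟪c.1.1, e⟫ ≥ c.1.2 ∧ ‖c.1.1‖ + c.1.2 ≤ 1 ∧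
      ⟪c.2.1, e⟫ = 0 ∧ ‖c.2.1‖ + c.2.2 ≤ 1 ∧ ‖c.1.1 - c.2.1‖ ≥ c.1.2 + c.2.2 :=
  ⟨fun ⟨h₁, h₂, h₃, h₄, h₅, h₆, h₇⟩ => ⟨h₁, h₂, h₃, h₄, h₅, h₆, h₇⟩,
    fun ⟨h₁, h₂, h₃, h₄, h₅, h₆, h₇⟩ => ⟨h₁, h₂, h₃, h₄, h₅, h₆, h₇⟩⟩

theorem Admissible.inner_nonneg {c : Config E} (hc : Admissible e c) : 0 ≤ ⟪c.1.1, e⟫ :=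
  hc.ball_radius_pos.le.trans hc.radius_le_height

theorem Admissible.two_mul_add_le_two (he : ‖e‖ = 1) {c : Config E} (hc : Admissible e c) :
    2 * c.1.2 + c.2.2 ≤ 2 := by
  have := inner_le_norm_of_norm_eq_one he c.1.1
  linarith [hc.radius_le_height, hc.ball_inside, hc.semiball_inside, norm_nonneg c.2.1]

def scaleRadii (a : ℝ) (c : Config E) : Config E := ((c.1.1, a * c.1.2), (c.2.1, a * c.2.2))

theorem admissible_scaleRadii {c : Config E} (hc : Admissible e c) {a : ℝ} (ha₀ : 0 < a)
    (ha₁ : a ≤ 1) : Admissible e (scaleRadii a c) := by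
  obtain ⟨hr, hs, hxe, hx, hye, hy, hxy⟩ := hc
  have hr' : a * c.1.2 ≤ c.1.2 := mul_le_of_le_one_left hr.le ha₁
  have hs' : a * c.2.2 ≤ c.2.2 := mul_le_of_le_one_left hs.le ha₁
  refine ⟨mul_pos ha₀ hr, mul_pos ha₀ hs, ?_, ?_, hye, ?_, ?_⟩ <;> simp only [scaleRadii] <;>
    linarith

theorem Admissible.raise (he : ‖e‖ = 1) {x y : E} {r s a : ℝ}
    (hc : Admissible e ((x, r), (y, s))) (ha : ⟪x, e⟫ ≤ a)
    (ha' : ‖horiz e x‖ ^ 2 + a ^ 2 ≤ (1 - r) ^ 2) :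
    Admissible e ((horiz e x + a • e, r), (y, s)) := by
  obtain ⟨hr, hs, hxe, hx, hye, hy, hxy⟩ := hc
  dsimp only at *
  have hu := inner_horiz_eq_zero he x
  have huy : ⟪horiz e x - y, e⟫ = 0 := by rw [inner_sub_left, hu, hye, sub_zero]
  have hsep : ‖x - y‖ ^ 2 ≤ ‖horiz e x + a • e - y‖ ^ 2 := by
    rw [show horiz e x + a • e - y = (horiz e x - y) + a • e by abel,
      norm_add_smul_sq_of_inner_eq_zero he huy,
      show x - y = (horiz e x - y) + ⟪x, e⟫ • e by simp only [horiz]; abel,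
      norm_add_smul_sq_of_inner_eq_zero he huy]
    nlinarith
  refine ⟨hr, hs, ?_, ?_, hye, hy, ?_⟩
  · dsimp only; rw [inner_add_smul_of_inner_eq_zero he hu]; linarith
  · have : ‖horiz e x + a • e‖ ^ 2 ≤ (1 - r) ^ 2 := by
      rwa [norm_add_smul_sq_of_inner_eq_zero he hu]
    dsimp only
    linarith [le_of_pow_le_pow_left₀ two_ne_zero (by linarith [norm_nonneg x]) this]
  · exact le_of_pow_le_pow_left₀ two_ne_zero (norm_nonneg _)
      ((pow_le_pow_left₀ (by linarith) hxy 2).trans hsep)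

noncomputable def raiseBall (e : E) (t : ℝ) (c : Config E) : Config E :=
  ((horiz e c.1.1 +
      ((1 - t) * ⟪c.1.1, e⟫ + t * √((1 - c.1.2) ^ 2 - ‖horiz e c.1.1‖ ^ 2)) • e, c.1.2), c.2)

theorem Admissible.sq_norm_horiz_add_sq_inner_le (he : ‖e‖ = 1) {c : Config E}
    (hc : Admissible e c) : ‖horiz e c.1.1‖ ^ 2 + ⟪c.1.1, e⟫ ^ 2 ≤ (1 - c.1.2) ^ 2 := by
  rw [← norm_sq_eq_norm_horiz_sq_add he]
  exact pow_le_pow_left₀ (norm_nonneg _) (by linarith [hc.ball_inside]) 2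

theorem admissible_raiseBall (he : ‖e‖ = 1) {c : Config E} (hc : Admissible e c) {t : ℝ}
    (ht : t ∈ Set.Icc (0 : ℝ) 1) : Admissible e (raiseBall e t c) := by
  obtain ⟨⟨x, r⟩, y, s⟩ := c
  have hx := hc.sq_norm_horiz_add_sq_inner_le he
  dsimp only at hx
  set h := ⟪x, e⟫
  set H := √((1 - r) ^ 2 - ‖horiz e x‖ ^ 2)
  have hH : H ^ 2 = (1 - r) ^ 2 - ‖horiz e x‖ ^ 2 := Real.sq_sqrt (by nlinarith)
  have hhH : h ≤ H := Real.le_sqrt_of_sq_le (by linarith)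
  have hh : 0 ≤ h := hc.inner_nonneg
  obtain ⟨ht₀, ht₁⟩ := ht
  have hha : h ≤ (1 - t) * h + t * H := by nlinarith
  have haH : (1 - t) * h + t * H ≤ H := by nlinarith
  exact hc.raise he hha (by nlinarith [pow_le_pow_left₀ (hh.trans hha) haH 2])

theorem norm_raiseBall_one_add (he : ‖e‖ = 1) {c : Config E} (hc : Admissible e c) :
    ‖(raiseBall e 1 c).1.1‖ + c.1.2 = 1 := by
  have hx := hc.sq_norm_horiz_add_sq_inner_le he
  have : ‖(raiseBall e 1 c).1.1‖ ^ 2 = (1 - c.1.2) ^ 2 := by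
    simp only [raiseBall, sub_self, zero_mul, one_mul, zero_add]
    rw [norm_add_smul_sq_of_inner_eq_zero he (inner_horiz_eq_zero he _),
      Real.sq_sqrt (by nlinarith)]
    ring
  rw [sq_eq_sq₀ (norm_nonneg _) (by linarith [hc.ball_inside, norm_nonneg c.1.1])] at this
  linarith

noncomputable def rotateBall (e : E) (t : ℝ) (c : Config E) : Config E :=
  (((1 - t) • horiz e c.1.1 + √(‖c.1.1‖ ^ 2 - (1 - t) ^ 2 * ‖horiz e c.1.1‖ ^ 2) • e, c.1.2),
    c.2)

theorem norm_sq_rotate_sub (he : ‖e‖ = 1) (x : E) {y : E} (hy : ⟪y, e⟫ = 0) {b : ℝ}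
    (hb : b ^ 2 ≤ 1) :
    ‖b • horiz e x + √(‖x‖ ^ 2 - b ^ 2 * ‖horiz e x‖ ^ 2) • e - y‖ ^ 2 =
      ‖x‖ ^ 2 + ‖y‖ ^ 2 - 2 * b * ⟪x, y⟫ := by
  have hu := inner_horiz_eq_zero he x
  have hx := norm_sq_eq_norm_horiz_sq_add he x
  have huy : ⟪horiz e x, y⟫ = ⟪x, y⟫ := by
    rw [horiz, inner_sub_left, real_inner_smul_left, ← real_inner_comm e y, hy, mul_zero, sub_zero]
  have hbuy : ⟪b • horiz e x - y, e⟫ = 0 := by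
    rw [inner_sub_left, real_inner_smul_left, hu, hy]; ring
  rw [show b • horiz e x + _ • e - y = (b • horiz e x - y) + _ • e by abel,
    norm_add_smul_sq_of_inner_eq_zero he hbuy, Real.sq_sqrt (by nlinarith [sq_nonneg ⟪x, e⟫]),
    norm_sub_sq_real, norm_smul, real_inner_smul_left, huy, mul_pow, Real.norm_eq_abs, sq_abs]
  ring

theorem norm_rotateBall_fst (he : ‖e‖ = 1) {c : Config E} {t : ℝ}
    (ht : t ∈ Set.Icc (0 : ℝ) 1) : ‖(rotateBall e t c).1.1‖ = ‖c.1.1‖ := by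
  have hb : (1 - t) ^ 2 ≤ 1 := by nlinarith [ht.1, ht.2]
  have h := norm_sq_rotate_sub he c.1.1 (inner_zero_left e) hb
  simp only [sub_zero, norm_zero, inner_zero_right] at h
  simp only [rotateBall]
  simpa using h

theorem admissible_rotateBall (he : ‖e‖ = 1) {c : Config E} (hc : Admissible e c)
    (hx : c.1.2 + c.2.2 ≤ ‖c.1.1‖) {t : ℝ} (ht : t ∈ Set.Icc (0 : ℝ) 1) :
    Admissible e (rotateBall e t c) := by
  obtain ⟨⟨x, r⟩, y, s⟩ := c
  obtain ⟨hr, hs, hxe, hxr, hye, hy, hxy⟩ := hc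
  dsimp only at *
  obtain ⟨ht₀, ht₁⟩ := ht
  have hb : (1 - t) ^ 2 ≤ 1 := by nlinarith
  have hdist := norm_sq_rotate_sub he x hye hb
  have hdec := norm_sq_eq_norm_horiz_sq_add he x
  have hxy2 := norm_sub_sq_real x y
  have hheight : r ≤ √(‖x‖ ^ 2 - (1 - t) ^ 2 * ‖horiz e x‖ ^ 2) :=
    hxe.trans (Real.le_sqrt_of_sq_le (by nlinarith [sq_nonneg ‖horiz e x‖]))
  refine ⟨hr, hs, ?_, ?_, hye, hy, ?_⟩
  · dsimp only [rotateBall]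
    rwa [inner_add_smul_of_inner_eq_zero he (by rw [real_inner_smul_left, inner_horiz_eq_zero he,
      mul_zero])]
  · rw [norm_rotateBall_fst he ⟨ht₀, ht₁⟩]
    exact hxr
  · dsimp only [rotateBall]
    refine le_of_pow_le_pow_left₀ two_ne_zero (norm_nonneg _) ?_
    rw [hdist]
    have hrs := pow_le_pow_left₀ (by linarith) hxy 2
    have hrs' := pow_le_pow_left₀ (by linarith) hx 2
    rcases le_or_gt 0 ⟪x, y⟫ with hxy0 | hxy0
    · nlinarith
    · nlinarith [sq_nonneg ‖y‖]

theorem rotateBall_zero (he : ‖e‖ = 1) {c : Config E} (hc : 0 ≤ ⟪c.1.1, e⟫) :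
    rotateBall e 0 c = c := by
  obtain ⟨⟨x, r⟩, y, s⟩ := c
  simp only [rotateBall, sub_zero, one_pow, one_mul, one_smul]
  rw [norm_sq_eq_norm_horiz_sq_add he x, add_sub_cancel_left, Real.sqrt_sq hc, horiz_add_smul]

theorem rotateBall_one_fst (c : Config E) : (rotateBall e 1 c).1.1 = ‖c.1.1‖ • e := by
  simp [rotateBall]

def poleConfig (e : E) (r : ℝ) (y : E) (s : ℝ) : Config E := (((1 - r) • e, r), (y, s))

theorem admissible_poleConfig (he : ‖e‖ = 1) {r s : ℝ} {y : E} (hr : 0 < r) (hs : 0 < s)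
    (hrs : 2 * r + s ≤ 1) (hy : ⟪y, e⟫ = 0) (hys : ‖y‖ + s ≤ 1) :
    Admissible e (poleConfig e r y s) := by
  have hx : ⟪(1 - r) • e, e⟫ = 1 - r := by
    simpa using inner_add_smul_of_inner_eq_zero he (inner_zero_left e) (1 - r)
  refine ⟨hr, hs, by simp only [poleConfig]; linarith, ?_, hy, hys, ?_⟩ <;>
    simp only [poleConfig]
  · rw [norm_smul, he, Real.norm_of_nonneg (by linarith)]; linarith
  · have := inner_le_norm_of_norm_eq_one he ((1 - r) • e - y)
    rw [inner_sub_left, hx, hy] at this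
    linarith

theorem contractibleSpace_atPole (he : ‖e‖ = 1) :
    ContractibleSpace
      {c : Config E // Admissible e c ∧ 2 * c.1.2 + c.2.2 ≤ 1 ∧ c.1.1 = (1 - c.1.2) • e} := by
  refine ContractibleSpace.of_deformation (q := (· = poleConfig e (1 / 4) 0 (1 / 4)))
    inferInstance
    (fun t c => poleConfig e ((1 - t) * c.1.2 + t / 4) ((1 - t) • c.2.1) ((1 - t) * c.2.2 + t / 4))
    (by unfold poleConfig; fun_prop) ?_ ?_ ?_ ?_
  · rintro t ⟨ht₀, ht₁⟩ ⟨⟨x, r⟩, y, s⟩ ⟨hc, hrs, -⟩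
    have hr : 0 < r := hc.ball_radius_pos
    have hs : 0 < s := hc.semiball_radius_pos
    have hr' : 0 < (1 - t) * r + t / 4 := by rcases le_total r (1 / 4) with h | h <;> nlinarith
    have hs' : 0 < (1 - t) * s + t / 4 := by rcases le_total s (1 / 4) with h | h <;> nlinarith
    have hrs' : 2 * ((1 - t) * r + t / 4) + ((1 - t) * s + t / 4) ≤ 1 := by nlinarith
    refine ⟨admissible_poleConfig he hr' hs' hrs' ?_ ?_, hrs', rfl⟩
    · rw [real_inner_smul_left, hc.semiball_flat, mul_zero]
    · rw [norm_smul, Real.norm_of_nonneg (by linarith)]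
      nlinarith [hc.semiball_inside]
  · rintro ⟨⟨x, r⟩, y, s⟩ ⟨-, -, hx⟩
    simp only [poleConfig, sub_zero, one_mul, zero_div, add_zero, one_smul]
    dsimp only at hx
    rw [hx]
  · intro c _
    simp only [poleConfig]
    norm_num
  · rintro c rfl
    refine ⟨admissible_poleConfig he (by norm_num) (by norm_num) (by norm_num) (inner_zero_left e)
      (by norm_num), by simp only [poleConfig]; norm_num, rfl⟩

theorem contractibleSpace_onRim (he : ‖e‖ = 1) :
    ContractibleSpace
      {c : Config E // Admissible e c ∧ 2 * c.1.2 + c.2.2 ≤ 1 ∧ ‖c.1.1‖ + c.1.2 = 1} := by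
  refine ContractibleSpace.of_deformation (contractibleSpace_atPole he) (rotateBall e)
    (by unfold rotateBall horiz; fun_prop) ?_ ?_ ?_ ?_
  · rintro t ht c ⟨hc, hrs, hx⟩
    refine ⟨admissible_rotateBall he hc (by linarith) ht, hrs, ?_⟩
    rwa [norm_rotateBall_fst he ht]
  · rintro c ⟨hc, -, -⟩
    exact rotateBall_zero he hc.inner_nonneg
  · rintro c ⟨hc, hrs, hx⟩
    refine ⟨admissible_rotateBall he hc (by linarith) ⟨zero_le_one, le_rfl⟩, hrs, ?_⟩
    rw [rotateBall_one_fst, show ‖c.1.1‖ = 1 - c.1.2 by linarith]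
    rfl
  · rintro c ⟨hc, hrs, hx⟩
    refine ⟨hc, hrs, ?_⟩
    have := hc.ball_inside
    rw [hx] at this ⊢
    rw [norm_smul, he, Real.norm_of_nonneg (by linarith [norm_nonneg ((1 - c.1.2) • e)])]
    ring

theorem contractibleSpace_smallRadii (he : ‖e‖ = 1) :
    ContractibleSpace {c : Config E // Admissible e c ∧ 2 * c.1.2 + c.2.2 ≤ 1} := by
  refine ContractibleSpace.of_deformation (contractibleSpace_onRim he) (raiseBall e)
    (by unfold raiseBall horiz; fun_prop) ?_ ?_ ?_ (fun _ h => ⟨h.1, h.2.1⟩)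
  · rintro t ht c ⟨hc, hrs⟩
    exact ⟨admissible_raiseBall he hc ht, hrs⟩
  · intro c _
    simp [raiseBall, horiz_add_smul]
  · rintro c ⟨hc, hrs⟩
    exact ⟨admissible_raiseBall he hc ⟨zero_le_one, le_rfl⟩, hrs, norm_raiseBall_one_add he hc⟩

theorem contractibleSpace_admissible (he : ‖e‖ = 1) :
    ContractibleSpace {c : Config E // Admissible e c} := by
  refine ContractibleSpace.of_deformation (contractibleSpace_smallRadii he)
    (fun t => scaleRadii (1 - t / 2))
    (by unfold scaleRadii; fun_prop) ?_ ?_ ?_ (fun _ h => h.1)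
  · rintro t ⟨ht₀, ht₁⟩ c hc
    exact admissible_scaleRadii hc (by linarith) (by linarith)
  · intro c _
    simp [scaleRadii]
  · intro c hc
    refine ⟨admissible_scaleRadii hc (by norm_num) (by norm_num), ?_⟩
    simp only [scaleRadii]
    linarith [hc.two_mul_add_le_two he]

end SwissCheese

theorem swissCheese_one_ball_one_semiball_contractible (d : ℕ) (hd : 2 ≤ d) :
    ContractibleSpace {c : (EuclideanSpace ℝ (Fin d) × ℝ) × (EuclideanSpace ℝ (Fin d) × ℝ) //
      0 < c.1.2 ∧ 0 < c.2.2 ∧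
      c.1.1 ⟨d - 1, by omega⟩ ≥ c.1.2 ∧ ‖c.1.1‖ + c.1.2 ≤ 1 ∧
      c.2.1 ⟨d - 1, by omega⟩ = 0 ∧ ‖c.2.1‖ + c.2.2 ≤ 1 ∧
      ‖c.1.1 - c.2.1‖ ≥ c.1.2 + c.2.2} := by
  set i : Fin d := ⟨d - 1, by omega⟩
  have he : ‖EuclideanSpace.single i (1 : ℝ)‖ = 1 := by simp
  have hcoord (x : EuclideanSpace ℝ (Fin d)) : ⟪x, EuclideanSpace.single i 1⟫ = x i := by
    simp [EuclideanSpace.inner_single_right]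
  convert SwissCheese.contractibleSpace_admissible he using 3 <;>
    simp only [SwissCheese.admissible_iff, hcoord]
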